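/- arXiv:1402.2259 — 3 statements merged into one kernel-verified Lean document; each statement's English description precedes it below -/
import Mathlib

section
/- Let p ∈ (1,∞) with conjugate exponent p′ (1/p + 1/p′ = 1), let E be a separable complex Banach space, and let T : E → L^{p′}(ℝ^d; ℂ) be a bounded linear operator. Suppose there exists a nonnegative function b ∈ L^{p′}(ℝ^d) such that for every ψ ∈ E one has |(Tψ)(x)| ≤ b(x)·‖ψ‖_E for almost every x ∈ ℝ^d. Then there exists a continuous linear functional F on the Bochner space L^p(ℝ^d; E), with operator norm at most ‖b‖_{L^{p′}(ℝ^d)}, such that for every φ ∈ L^p(ℝ^d; ℂ) and every ψ ∈ E, F(x ↦ φ(x)·ψ) = ∫_{ℝ^d} (Tψ)(x)·φ(x) dx. -/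
/-!
For almost every `x`, the values `(Tψ)(x)` are linear in `ψ` and bounded by `b x * ‖ψ‖` when
`ψ` ranges over a countable dense subset of `E` and the scalars over a countable dense subset of
`ℂ`: only countably many null sets are discarded. By density this defines a kernel
`k x : E →L[ℂ] ℂ` with `‖k x ψ‖ ≤ b x * ‖ψ‖` and `k · ψ = Tψ` almost everywhere for every `ψ`.
The functional is `F g = ∫ k x (g x) dx`, and Hölder's inequality gives `‖F‖ ≤ ‖b‖_{p'}`.
-/

open MeasureTheory Filter TopologicalSpace

section Extension

variable {𝕜 E G : Type*} [NormedField 𝕜] [NormedAddCommGroup E] [NormedSpace 𝕜 E]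
  [NormedAddCommGroup G] [NormedSpace 𝕜 G]

theorem exists_continuousLinearMap_eqOn_of_dense [CompleteSpace G] {D : Set E} (hD : Dense D)
    {S : Set 𝕜} (hS : Dense S) {f : E → G} {C : ℝ}
    (hf : ∀ x ∈ D, ∀ y ∈ D, ∀ z ∈ D, ∀ a ∈ S, ∀ b ∈ S,
      ‖f x - a • f y - b • f z‖ ≤ C * ‖x - a • y - b • z‖) :
    ∃ L : E →L[𝕜] G, Set.EqOn L f D ∧ ∀ x, ‖L x‖ ≤ C * ‖x‖ := by
  have hf' : ∀ x ∈ D, ∀ y ∈ D, ∀ z ∈ D, ∀ a b : 𝕜,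
      ‖f x - a • f y - b • f z‖ ≤ C * ‖x - a • y - b • z‖ := fun x hx y hy z hz a b =>
    hS.denseRange_val.induction_on₂
      (p := fun a b => ‖f x - a • f y - b • f z‖ ≤ C * ‖x - a • y - b • z‖)
      (isClosed_le (by fun_prop) (by fun_prop)) (fun a b => hf x hx y hy z hz a a.2 b b.2) a b
  have hlip : LipschitzWith C.toNNReal fun x : D => f x := .of_dist_le_mul fun x y => by
    rw [Subtype.dist_eq, dist_eq_norm, dist_eq_norm]
    simpa using (hf' x x.2 y y.2 y y.2 1 0).trans
      (mul_le_mul_of_nonneg_right C.le_coe_toNNReal (norm_nonneg _))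
  have hval := isUniformInducing_val D
  set L := (hval.isDenseInducing hD.denseRange_val).extend fun x : D => f x
  have hL_cont : Continuous L :=
    (uniformContinuous_uniformly_extend hval hD.denseRange_val hlip.uniformContinuous).continuous
  have hL_eq : ∀ x : D, L x = f x :=
    uniformly_extend_of_ind hval hD.denseRange_val hlip.uniformContinuous
  have hL : ∀ x y z : E, ∀ a b : 𝕜, ‖L x - a • L y - b • L z‖ ≤ C * ‖x - a • y - b • z‖ :=
    fun x y z a b => hD.denseRange_val.induction_on₃
      (p := fun x y z => ‖L x - a • L y - b • L z‖ ≤ C * ‖x - a • y - b • z‖)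
      (isClosed_le (by fun_prop) (by fun_prop))
      (fun x y z => by simpa only [hL_eq] using hf' x x.2 y y.2 z z.2 a b) x y z
  have eq_of_le_zero : ∀ v w : G, ‖v - w‖ ≤ C * ‖(0 : E)‖ → v = w := fun v w h =>
    sub_eq_zero.mp (norm_le_zero_iff.mp (by simpa using h))
  refine ⟨{ toFun := L, map_add' := fun x y => ?_, map_smul' := fun a x => ?_, cont := hL_cont },
    fun x hx => hL_eq ⟨x, hx⟩, fun x => by simpa using hL x x x 0 0⟩
  · exact eq_of_le_zero _ _ (by simpa [sub_sub] using hL (x + y) x y 1 1)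
  · exact eq_of_le_zero _ _ (by simpa using hL (a • x) x x a 0)

end Extension

section Kernel

variable {𝕜 E G α : Type*} [NormedField 𝕜] [NormedAddCommGroup E] [NormedSpace 𝕜 E]
  [NormedAddCommGroup G] [NormedSpace 𝕜 G] [MeasurableSpace α] {μ : Measure α}

theorem exists_continuousLinearMap_ae_eq [SeparableSpace 𝕜] [SeparableSpace E] [CompleteSpace G]
    (T : E →ₗ[𝕜] α →ₘ[μ] G) {β : α → ℝ} (hT : ∀ ψ, ∀ᵐ x ∂μ, ‖T ψ x‖ ≤ β x * ‖ψ‖) :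
    ∃ k : α → E →L[𝕜] G,
      (∀ᵐ x ∂μ, ∀ ψ, ‖k x ψ‖ ≤ β x * ‖ψ‖) ∧ ∀ ψ, (fun x => k x ψ) =ᵐ[μ] T ψ := by
  have hT₃ : ∀ y z w : E, ∀ a b : 𝕜,
      ∀ᵐ x ∂μ, ‖T y x - a • T z x - b • T w x‖ ≤ β x * ‖y - a • z - b • w‖ := by
    intro y z w a b
    filter_upwards [hT (y - a • z - b • w), AEEqFun.coeFn_sub (T y - a • T z) (b • T w),
      AEEqFun.coeFn_sub (T y) (a • T z), AEEqFun.coeFn_smul a (T z),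
      AEEqFun.coeFn_smul b (T w)] with x hx h₁ h₂ h₃ h₄
    simpa [h₁, h₂, h₃, h₄] using hx
  obtain ⟨D, hD_count, hD⟩ := exists_countable_dense E
  obtain ⟨S, hS_count, hS⟩ := exists_countable_dense 𝕜
  set Good : α → Prop := fun x => ∀ y ∈ D, ∀ z ∈ D, ∀ w ∈ D, ∀ a ∈ S, ∀ b ∈ S,
    ‖T y x - a • T z x - b • T w x‖ ≤ β x * ‖y - a • z - b • w‖
  have hGood : ∀ᵐ x ∂μ, Good x := by
    simp only [Good, ae_ball_iff hD_count, ae_ball_iff hS_count]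
    exact fun y _ z _ w _ a _ b _ => hT₃ y z w a b
  have hk : ∀ x, ∃ L : E →L[𝕜] G,
      Good x → Set.EqOn L (fun y => T y x) D ∧ ∀ ψ, ‖L ψ‖ ≤ β x * ‖ψ‖ := fun x => by
    by_cases hx : Good x
    · obtain ⟨L, hL⟩ := exists_continuousLinearMap_eqOn_of_dense hD hS hx
      exact ⟨L, fun _ => hL⟩
    · exact ⟨0, fun h => (hx h).elim⟩
  choose k hk using hk
  refine ⟨k, hGood.mono fun x hx => (hk x hx).2, fun ψ => ?_⟩
  have hψ : ∀ᵐ x ∂μ, ∀ y ∈ D, ‖T ψ x - T y x‖ ≤ β x * ‖ψ - y‖ := by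
    rw [ae_ball_iff hD_count]
    exact fun y _ => by simpa using hT₃ ψ y y 1 0
  filter_upwards [hGood, hψ] with x hx hψx
  obtain ⟨hk_eq, hk_le⟩ := hk x hx
  -- `k x` and `T · x` are both `β x`-Lipschitz and agree on the dense set `D`
  have hdist : ∀ y ∈ D, ‖k x ψ - T ψ x‖ ≤ 2 * β x * ‖ψ - y‖ := fun y hy => calc
    ‖k x ψ - T ψ x‖ = ‖k x (ψ - y) - (T ψ x - T y x)‖ := by rw [map_sub, hk_eq hy]; abel_nf
    _ ≤ β x * ‖ψ - y‖ + β x * ‖ψ - y‖ :=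
      (norm_sub_le _ _).trans (add_le_add (hk_le _) (hψx y hy))
    _ = 2 * β x * ‖ψ - y‖ := by ring
  have := hD.denseRange_val.induction_on (p := fun y => ‖k x ψ - T ψ x‖ ≤ 2 * β x * ‖ψ - y‖) ψ
    (isClosed_le (by fun_prop) (by fun_prop)) fun y => hdist y y.2
  simpa [sub_eq_zero] using this

theorem MeasureTheory.AEStronglyMeasurable.clm_apply_of_forall {g : α → E}
    (hg : AEStronglyMeasurable g μ) {k : α → E →L[𝕜] G}
    (hk : ∀ ψ, AEStronglyMeasurable (fun x => k x ψ) μ) :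
    AEStronglyMeasurable (fun x => k x (g x)) μ := by
  have hsimple : ∀ s : SimpleFunc α E, AEStronglyMeasurable (fun x => k x (s x)) μ := by
    refine SimpleFunc.induction (fun c s hs => ?_) (fun s t _ hs ht => ?_)
    · convert (hk c).indicator hs using 1
      ext x
      by_cases hx : x ∈ s <;> simp [hx]
    · simp only [SimpleFunc.coe_add, Pi.add_apply, map_add]
      exact hs.add ht
  refine aestronglyMeasurable_of_tendsto_ae atTop
    (fun n => hsimple (hg.stronglyMeasurable_mk.approx n)) ?_
  filter_upwards [hg.ae_eq_mk] with x hx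
  rw [hx]
  exact ((k x).continuous.tendsto _).comp (hg.stronglyMeasurable_mk.tendsto_approx x)

end Kernel

section Integral

variable {𝕜 E G α : Type*} [NontriviallyNormedField 𝕜] [NormedAddCommGroup E] [NormedSpace 𝕜 E]
  [NormedAddCommGroup G] [NormedSpace 𝕜 G] [MeasurableSpace α] {μ : Measure α}

theorem eLpNorm_one_clm_apply_le {p q : ENNReal} [p.HolderConjugate q] {k : α → E →L[𝕜] G}
    {β : α → ℝ} (hβ : AEStronglyMeasurable β μ) (hkβ : ∀ᵐ x ∂μ, ∀ ψ, ‖k x ψ‖ ≤ β x * ‖ψ‖)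
    {g : α → E} (hg : AEStronglyMeasurable g μ) :
    eLpNorm (fun x => k x (g x)) 1 μ ≤ eLpNorm β q μ * eLpNorm g p μ := calc
  eLpNorm (fun x => k x (g x)) 1 μ ≤ eLpNorm (β • fun x => ‖g x‖) 1 μ :=
    eLpNorm_mono_ae_real (hkβ.mono fun x hx => hx (g x))
  _ ≤ eLpNorm β q μ * eLpNorm (fun x => ‖g x‖) p μ := eLpNorm_smul_le_mul_eLpNorm hg.norm hβ
  _ = eLpNorm β q μ * eLpNorm g p μ := by rw [eLpNorm_norm]

theorem exists_continuousLinearMap_Lp_eq_integral [NormedSpace ℝ G] [SMulCommClass ℝ 𝕜 G]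
    [CompleteSpace G] {p q : ENNReal} [Fact (1 ≤ p)] [p.HolderConjugate q] {k : α → E →L[𝕜] G}
    (hk : ∀ ψ, AEStronglyMeasurable (fun x => k x ψ) μ) {β : α → ℝ} (hβ : MemLp β q μ)
    (hkβ : ∀ᵐ x ∂μ, ∀ ψ, ‖k x ψ‖ ≤ β x * ‖ψ‖) :
    ∃ F : Lp E p μ →L[𝕜] G, ‖F‖ ≤ (eLpNorm β q μ).toReal ∧
      ∀ g : Lp E p μ, F g = ∫ x, k x (g x) ∂μ := by
  have hle (g : Lp E p μ) :=
    eLpNorm_one_clm_apply_le (p := p) (q := q) hβ.1 hkβ (Lp.aestronglyMeasurable g)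
  have hint (g : Lp E p μ) : Integrable (fun x => k x (g x)) μ :=
    memLp_one_iff_integrable.mp ⟨(Lp.aestronglyMeasurable g).clm_apply_of_forall hk,
      (hle g).trans_lt (ENNReal.mul_lt_top hβ.eLpNorm_lt_top (Lp.eLpNorm_lt_top g))⟩
  let F : Lp E p μ →ₗ[𝕜] G :=
    { toFun := fun g => ∫ x, k x (g x) ∂μ
      map_add' := fun g h => by
        rw [← integral_add (hint g) (hint h)]
        refine integral_congr_ae ?_
        filter_upwards [Lp.coeFn_add g h] with x hx
        rw [hx, Pi.add_apply, map_add]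
      map_smul' := fun c g => by
        rw [RingHom.id_apply, ← integral_smul]
        refine integral_congr_ae ?_
        filter_upwards [Lp.coeFn_smul c g] with x hx
        simp [hx] }
  have hF : ∀ g, ‖F g‖ ≤ (eLpNorm β q μ).toReal * ‖g‖ := fun g => calc
    ‖F g‖ ≤ (eLpNorm (fun x => k x (g x)) 1 μ).toReal :=
      (norm_integral_le_lintegral_norm _).trans_eq (by simp [eLpNorm_one_eq_lintegral_enorm])
    _ ≤ (eLpNorm β q μ * eLpNorm g p μ).toReal :=
      ENNReal.toReal_mono (ENNReal.mul_ne_top hβ.eLpNorm_ne_top (Lp.eLpNorm_ne_top g)) (hle g)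
    _ = (eLpNorm β q μ).toReal * ‖g‖ := by rw [ENNReal.toReal_mul, Lp.norm_def]
  exact ⟨F.mkContinuous _ hF, F.mkContinuous_norm_le ENNReal.toReal_nonneg hF, fun g => rfl⟩

end Integral

theorem bilinear_extension_of_dominated_general
    (d : ℕ) (p p' : ℝ) (hp : 1 < p) (hconj : 1 / p + 1 / p' = 1)
    (E : Type*) [NormedAddCommGroup E] [NormedSpace ℂ E]
    [TopologicalSpace.SeparableSpace E]
    [Fact (1 ≤ ENNReal.ofReal p)] [Fact (1 ≤ ENNReal.ofReal p')]
    (T : E →L[ℂ] Lp ℂ (ENNReal.ofReal p') (volume : Measure (Fin d → ℝ)))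
    (b : (Fin d → ℝ) → ℝ)
    (hb_mem : MemLp b (ENNReal.ofReal p') (volume : Measure (Fin d → ℝ)))
    (hT_dom : ∀ ψ : E, ∀ᵐ x ∂(volume : Measure (Fin d → ℝ)),
      ‖(T ψ : (Fin d → ℝ) → ℂ) x‖ ≤ b x * ‖ψ‖) :
    ∃ F : Lp E (ENNReal.ofReal p) (volume : Measure (Fin d → ℝ)) →L[ℂ] ℂ,
      ‖F‖ ≤ (eLpNorm b (ENNReal.ofReal p') (volume : Measure (Fin d → ℝ))).toReal ∧
      ∀ (φ : Lp ℂ (ENNReal.ofReal p) (volume : Measure (Fin d → ℝ))) (ψ : E)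
        (g : Lp E (ENNReal.ofReal p) (volume : Measure (Fin d → ℝ))),
        (g : (Fin d → ℝ) → E) =ᵐ[volume] (fun x => φ x • ψ) →
        F g = ∫ x : Fin d → ℝ, (T ψ : (Fin d → ℝ) → ℂ) x * (φ : (Fin d → ℝ) → ℂ) x := by
  have : (ENNReal.ofReal p).HolderConjugate (ENNReal.ofReal p') :=
    (Real.holderConjugate_iff.mpr ⟨hp, by simpa only [one_div] using hconj⟩).ennrealOfReal
  obtain ⟨k, hk_le, hk_eq⟩ :=
    exists_continuousLinearMap_ae_eq ((Lp.LpSubmodule ℂ ℂ _ _).subtype ∘ₗ T.toLinearMap) hT_dom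
  obtain ⟨F, hF_norm, hF⟩ := exists_continuousLinearMap_Lp_eq_integral (p := ENNReal.ofReal p)
    (fun ψ => (Lp.aestronglyMeasurable (T ψ)).congr (hk_eq ψ).symm) hb_mem hk_le
  refine ⟨F, hF_norm, fun φ ψ g hg => (hF g).trans (integral_congr_ae ?_)⟩
  filter_upwards [hg, hk_eq ψ] with x hgx hkx
  rw [hgx, map_smul, hkx, smul_eq_mul, mul_comm]
  rfl

/-- If `T : E → L^{p'}(ℝ^d; ℂ)` is a bounded operator on a separable complex Banach space `E`
and there is a nonnegative `b ∈ L^{p'}(ℝ^d)` with `|(Tψ)(x)| ≤ b(x)‖ψ‖` a.e. for every `ψ`,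
then there is a continuous linear functional `F` on the Bochner space `L^p(ℝ^d; E)`, of norm
at most `‖b‖_{L^{p'}}`, such that `F(φ·ψ) = ∫ (Tψ)(x) φ(x) dx` for all `φ ∈ L^p(ℝ^d; ℂ)`,
`ψ ∈ E`. -/
theorem bilinear_extension_of_dominated
    (d : ℕ) (p p' : ℝ) (hp : 1 < p) (hconj : 1 / p + 1 / p' = 1)
    (E : Type*) [NormedAddCommGroup E] [NormedSpace ℂ E] [CompleteSpace E]
    [TopologicalSpace.SeparableSpace E]
    [Fact (1 ≤ ENNReal.ofReal p)] [Fact (1 ≤ ENNReal.ofReal p')]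
    (T : E →L[ℂ] Lp ℂ (ENNReal.ofReal p') (volume : Measure (Fin d → ℝ)))
    (b : (Fin d → ℝ) → ℝ) (hb_nonneg : ∀ x, 0 ≤ b x)
    (hb_mem : MemLp b (ENNReal.ofReal p') (volume : Measure (Fin d → ℝ)))
    (hT_dom : ∀ ψ : E, ∀ᵐ x ∂(volume : Measure (Fin d → ℝ)),
      ‖(T ψ : (Fin d → ℝ) → ℂ) x‖ ≤ b x * ‖ψ‖) :
    ∃ F : Lp E (ENNReal.ofReal p) (volume : Measure (Fin d → ℝ)) →L[ℂ] ℂ,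
      ‖F‖ ≤ (eLpNorm b (ENNReal.ofReal p') (volume : Measure (Fin d → ℝ))).toReal ∧
      ∀ (φ : Lp ℂ (ENNReal.ofReal p) (volume : Measure (Fin d → ℝ))) (ψ : E)
        (g : Lp E (ENNReal.ofReal p) (volume : Measure (Fin d → ℝ))),
        (g : (Fin d → ℝ) → E) =ᵐ[volume] (fun x => φ x • ψ) →
        F g = ∫ x : Fin d → ℝ, (T ψ : (Fin d → ℝ) → ℂ) x * (φ : (Fin d → ℝ) → ℂ) x :=
  bilinear_extension_of_dominated_general d p p' hp hconj E T b hb_mem hT_dom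
end

section
/- Let p ∈ (1,∞) with conjugate exponent p′ (1/p + 1/p′ = 1), let E be a separable complex Banach space, and let T : E → L^{p′}(ℝ^d; ℂ) be a bounded linear operator. Suppose there exists a continuous linear functional F on the Bochner space L^p(ℝ^d; E) such that for every φ ∈ L^p(ℝ^d; ℂ) and every ψ ∈ E, F(x ↦ φ(x)·ψ) = ∫_{ℝ^d} (Tψ)(x)·φ(x) dx. Then there exists a nonnegative function b ∈ L^{p′}(ℝ^d) such that for every ψ ∈ E, |(Tψ)(x)| ≤ b(x)·‖ψ‖_E for almost every x ∈ ℝ^d. -/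
/-!
Normalise a dense sequence `v n` of `E` to vectors `w n` of norm at most one and let `g n`
represent `T (w n)`. Fix `N` and let `k x ≤ N` be an index at which `‖g n x‖` is maximal.
Testing `F` on `∑ n ≤ N, 1_{k = n} φ (‖g n‖ / g n) ⊗ w n`, whose norm is at most `φ`, gives
`∫ φ · max_{n ≤ N} ‖g n‖ ≤ ‖F‖ ‖φ‖_p` for all `φ ≥ 0`, so by duality
`‖max_{n ≤ N} ‖g n‖‖_{p'} ≤ ‖F‖`. By monotone convergence `b = sup_n ‖g n‖` is in `L^{p'}`,
and `‖T ψ‖ ≤ b ‖ψ‖` passes from the dense sequence to every `ψ` since convergence in `L^{p'}`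
gives a.e. convergence along a subsequence.
-/

open MeasureTheory Filter
open scoped ENNReal

section

variable {X : Type*} [MeasurableSpace X] {μ : Measure X}

theorem eLpNorm_le_of_integral_mul_le {p q : ℝ} (hpq : p.HolderConjugate q) {M : X → ℝ}
    (hM : Measurable M) (hM0 : 0 ≤ M) (hMq : MemLp M (.ofReal q) μ) {C : ℝ}
    (h : ∀ φ : X → ℝ, Measurable φ → 0 ≤ φ → MemLp φ (.ofReal p) μ →
      ∫ x, M x * φ x ∂μ ≤ C * (eLpNorm φ (.ofReal p) μ).toReal) :
    eLpNorm M (.ofReal q) μ ≤ .ofReal C := by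
  have hq0 : 0 < q := hpq.symm.pos
  have hq1 : 0 < q - 1 := sub_pos.2 hpq.symm.lt
  set s := lpNorm M (.ofReal q) μ
  have hs : eLpNorm M (.ofReal q) μ = .ofReal s := (ofReal_lpNorm hMq).symm
  have hnorm : ∀ x, ‖M x‖ = M x := fun x => Real.norm_of_nonneg (hM0 x)
  -- test against `M ^ (q - 1)`, the function for which Hölder's inequality is an equality
  have hφ : eLpNorm (fun x => M x ^ (q - 1)) (.ofReal p) μ = .ofReal (s ^ (q - 1)) := by
    have := eLpNorm_norm_rpow M (p := .ofReal p) (μ := μ) hq1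
    simp only [hnorm] at this
    rw [this, ← ENNReal.ofReal_mul hpq.nonneg, mul_comm, hpq.symm.sub_one_mul_conj, hs,
      ENNReal.ofReal_rpow_of_nonneg lpNorm_nonneg hq1.le]
  have hint : ∫ x, M x * M x ^ (q - 1) ∂μ = s ^ q := by
    have hsq : s = (∫ x, M x ^ q ∂μ) ^ q⁻¹ := by
      simp only [s, lpNorm_eq_integral_norm_rpow_toReal (by simpa using hq0) ENNReal.ofReal_ne_top
        hMq.1, hnorm, ENNReal.toReal_ofReal hq0.le]
    rw [hsq, Real.rpow_inv_rpow (integral_nonneg fun x => Real.rpow_nonneg (hM0 x) _) hq0.ne']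
    congr 1 with x
    rw [mul_comm, ← Real.rpow_add_one' (hM0 x) (by simp [hq0.ne']), sub_add_cancel]
  have hφm : Measurable fun x => M x ^ (q - 1) := hM.pow_const _
  have key := h _ hφm (fun x => Real.rpow_nonneg (hM0 x) _) ⟨hφm.aestronglyMeasurable, by
    rw [hφ]; exact ENNReal.ofReal_lt_top⟩
  rw [hint, hφ, ENNReal.toReal_ofReal (Real.rpow_nonneg lpNorm_nonneg _)] at key
  rw [hs]
  rcases (lpNorm_nonneg : 0 ≤ s).eq_or_lt with hs0 | hs0
  · rw [show s = 0 from hs0.symm, ENNReal.ofReal_zero]; exact zero_le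
  refine ENNReal.ofReal_le_ofReal (le_of_mul_le_mul_left ?_ (Real.rpow_pos_of_pos hs0 (q - 1)))
  rwa [← Real.rpow_add_one' hs0.le (by simp [hq0.ne']), sub_add_cancel, mul_comm]

theorem eLpNorm_iSup_of_monotone {f : ℕ → X → ℝ≥0∞} (hf : ∀ n, Measurable (f n))
    (hmono : Monotone f) {p : ℝ≥0∞} (hp0 : p ≠ 0) (hp : p ≠ ∞) :
    eLpNorm (fun x => ⨆ n, f n x) p μ = ⨆ n, eLpNorm (f n) p μ := by
  have hr : 0 < p.toReal := ENNReal.toReal_pos hp0 hp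
  have iSup_rpow : ∀ (a : ℕ → ℝ≥0∞) {t : ℝ}, 0 < t → (⨆ n, a n) ^ t = ⨆ n, a n ^ t :=
    fun a t ht => (ENNReal.orderIsoRpow t ht).map_iSup a
  simp only [eLpNorm_eq_lintegral_rpow_enorm_toReal hp0 hp, enorm_eq_self, iSup_rpow _ hr]
  rw [lintegral_iSup (fun n => (hf n).pow_const _)
    (fun m n hmn x => ENNReal.rpow_le_rpow (hmono hmn x) hr.le), iSup_rpow _ (by positivity)]

theorem ae_lt_top_of_eLpNorm_ne_top {f : X → ℝ≥0∞} (hf : Measurable f) {p : ℝ≥0∞} (hp0 : p ≠ 0)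
    (hp : p ≠ ∞) (hfp : eLpNorm f p μ ≠ ∞) : ∀ᵐ x ∂μ, f x < ∞ := by
  have hr : 0 < p.toReal := ENNReal.toReal_pos hp0 hp
  rw [eLpNorm_eq_lintegral_rpow_enorm_toReal hp0 hp] at hfp
  simp only [enorm_eq_self] at hfp
  filter_upwards [ae_lt_top (hf.pow_const p.toReal)
    (by simpa [hr] using (ENNReal.rpow_eq_top_iff_of_pos (one_div_pos.2 hr)).not.1 hfp)] with x hx
  exact (ENNReal.rpow_lt_top_iff_of_pos hr).1 hx

theorem exists_memLp_ae_le_of_eLpNorm_partialSups_le {h : ℕ → X → ℝ} (hh : ∀ n, Measurable (h n))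
    (hh0 : ∀ n, 0 ≤ h n) {p : ℝ≥0∞} (hp0 : p ≠ 0) (hp : p ≠ ∞) {C : ℝ≥0∞} (hC : C ≠ ∞)
    (hbound : ∀ N, eLpNorm (partialSups h N) p μ ≤ C) :
    ∃ b : X → ℝ, 0 ≤ b ∧ MemLp b p μ ∧ ∀ n, h n ≤ᵐ[μ] b := by
  have hhN : ∀ N, Measurable (partialSups h N) := fun N =>
    Finset.measurable_sup' Finset.nonempty_Iic fun n _ => hh n
  set f : ℕ → X → ℝ≥0∞ := fun N x => .ofReal (partialSups h N x)
  have hfm : ∀ N, Measurable (f N) := fun N => (hhN N).ennreal_ofReal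
  set B : X → ℝ≥0∞ := fun x => ⨆ N, f N x
  have hBm : Measurable B := Measurable.iSup hfm
  have hB : eLpNorm B p μ ≤ C := by
    rw [eLpNorm_iSup_of_monotone hfm (fun m n hmn x => ENNReal.ofReal_le_ofReal
      (partialSups_monotone h hmn x)) hp0 hp]
    refine iSup_le fun N => ?_
    refine le_of_eq_of_le ?_ (hbound N)
    exact eLpNorm_ofReal _ (.of_forall fun x => (hh0 0).trans (le_partialSups_of_le h N.zero_le) x)
  refine ⟨fun x => (B x).toReal, fun x => ENNReal.toReal_nonneg,
    ⟨hBm.ennreal_toReal.aestronglyMeasurable, ?_⟩, fun n => ?_⟩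
  · refine (eLpNorm_mono_enorm fun x => ?_).trans_lt (hB.trans_lt hC.lt_top)
    rw [Real.enorm_of_nonneg ENNReal.toReal_nonneg, enorm_eq_self]
    exact ENNReal.ofReal_toReal_le
  · filter_upwards [ae_lt_top_of_eLpNorm_ne_top hBm hp0 hp (ne_top_of_le_ne_top hC hB)] with x hx
    rw [← ENNReal.toReal_ofReal (hh0 n x)]
    exact ENNReal.toReal_mono hx.ne
      (le_iSup_of_le n (ENNReal.ofReal_le_ofReal (le_partialSups h n x)))

theorem ae_norm_le_mul_norm_of_denseRange {E F : Type*} [NormedAddCommGroup E]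
    [NormedAddCommGroup F] {r : ℝ≥0∞} [Fact (1 ≤ r)] {T : E → Lp F r μ} (hT : Continuous T)
    {b : X → ℝ} {ι : Type*} {v : ι → E} (hv : DenseRange v)
    (hTv : ∀ i, ∀ᵐ x ∂μ, ‖T (v i) x‖ ≤ b x * ‖v i‖) (ψ : E) :
    ∀ᵐ x ∂μ, ‖T ψ x‖ ≤ b x * ‖ψ‖ := by
  refine hv.induction_on ψ (IsSeqClosed.isClosed fun ψs ψ hψs hlim => ?_) hTv
  obtain ⟨ns, hns, hae⟩ :=
    (tendstoInMeasure_of_tendsto_Lp ((hT.tendsto ψ).comp hlim)).exists_seq_tendsto_ae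
  filter_upwards [ae_all_iff.2 fun k => hψs (ns k), hae] with x hle hx
  exact le_of_tendsto_of_tendsto' hx.norm
    (((hlim.comp hns.tendsto_atTop).norm).const_mul (b x)) fun k => hle k

theorem ae_norm_le_mul_norm_of_normalized {𝕜 E F : Type*} [RCLike 𝕜] [NormedAddCommGroup E]
    [NormedSpace 𝕜 E] [NormedAddCommGroup F] [NormedSpace 𝕜 F] {r : ℝ≥0∞} [Fact (1 ≤ r)]
    (T : E →L[𝕜] Lp F r μ) {b : X → ℝ} (v : E)
    (h : ∀ᵐ x ∂μ, ‖T (((‖v‖⁻¹ : ℝ) : 𝕜) • v) x‖ ≤ b x) :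
    ∀ᵐ x ∂μ, ‖T v x‖ ≤ b x * ‖v‖ := by
  have hv : v = ((‖v‖ : ℝ) : 𝕜) • ((‖v‖⁻¹ : ℝ) : 𝕜) • v := by
    by_cases hv0 : v = 0
    · simp [hv0]
    · rw [smul_smul, ← RCLike.ofReal_mul, mul_inv_cancel₀ (norm_ne_zero_iff.2 hv0),
        RCLike.ofReal_one, one_smul]
  have hTv : T v = ((‖v‖ : ℝ) : 𝕜) • T (((‖v‖⁻¹ : ℝ) : 𝕜) • v) := by
    rw [← map_smul, ← hv]
  rw [hTv]
  filter_upwards [Lp.coeFn_smul ((‖v‖ : ℝ) : 𝕜) (T (((‖v‖⁻¹ : ℝ) : 𝕜) • v)), h] with x hsmul hx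
  rw [hsmul, Pi.smul_apply, norm_smul, RCLike.norm_ofReal, abs_norm, mul_comm]
  exact mul_le_mul_of_nonneg_right hx (norm_nonneg v)

theorem exists_measurable_argmax {h : ℕ → X → ℝ} (hh : ∀ n, Measurable (h n)) (s : Finset ℕ)
    (hs : s.Nonempty) :
    ∃ k : X → ℕ, Measurable k ∧ ∀ x, k x ∈ s ∧ h (k x) x = s.sup' hs (h · x) := by
  classical
  have hex : ∀ x, ∃ n, n ∈ s ∧ h n x = s.sup' hs (h · x) := fun x => by
    obtain ⟨n, hn, heq⟩ := Finset.exists_mem_eq_sup' hs (h · x)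
    exact ⟨n, hn, heq.symm⟩
  have hsup : Measurable fun x => s.sup' hs (h · x) :=
    funext (Finset.sup'_apply hs h) ▸ Finset.measurable_sup' hs fun n _ => hh n
  refine ⟨fun x => Nat.find (hex x), measurable_find hex fun n => ?_,
    fun x => Nat.find_spec (hex x)⟩
  exact (MeasurableSet.const _).inter (measurableSet_eq_fun (hh n) hsup)

variable {E : Type*} [NormedAddCommGroup E] [NormedSpace ℂ E]

def ActsByIntegration {r : ℝ≥0∞} [Fact (1 ≤ r)] (F : Lp E r μ →L[ℂ] ℂ) (ψ : E) (g : X → ℂ) :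
    Prop :=
  ∀ (φ : Lp ℂ r μ) (G : Lp E r μ), ⇑G =ᵐ[μ] (fun x => φ x • ψ) → F G = ∫ x, g x * φ x ∂μ

theorem ActsByIntegration.congr {r : ℝ≥0∞} [Fact (1 ≤ r)] {F : Lp E r μ →L[ℂ] ℂ} {ψ : E}
    {g g' : X → ℂ} (hF : ActsByIntegration F ψ g) (hg : g =ᵐ[μ] g') :
    ActsByIntegration F ψ g' := fun φ G hG =>
  (hF φ G hG).trans <| integral_congr_ae <| by
    filter_upwards [hg] with x hx
    rw [hx]

variable {p : ℝ} [Fact (1 ≤ ENNReal.ofReal p)] {F : Lp E (.ofReal p) μ →L[ℂ] ℂ}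

theorem exists_Lp_ae_eq_sum_smul_and_apply_eq {ι : Type*} {ψ : ι → E} {g : ι → X → ℂ}
    (hF : ∀ n, ActsByIntegration F (ψ n) (g n))
    (s : Finset ι) {φ : ι → X → ℂ} (hφ : ∀ n, MemLp (φ n) (.ofReal p) μ) :
    ∃ G : Lp E (.ofReal p) μ, ⇑G =ᵐ[μ] (fun x => ∑ n ∈ s, φ n x • ψ n) ∧
      F G = ∑ n ∈ s, ∫ x, g n x * φ n x ∂μ := by
  have hφψ : ∀ n, MemLp (fun x => φ n x • ψ n) (.ofReal p) μ := fun n =>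
    (memLp_top_const (ψ n)).smul (hφ n)
  refine ⟨∑ n ∈ s, (hφψ n).toLp _, ?_, ?_⟩
  · filter_upwards [Lp.coeFn_fun_finsetSum s fun n => (hφψ n).toLp _,
      (eventually_all_finset s).2 fun n _ => (hφψ n).coeFn_toLp] with x hsum hx
    rw [hsum]
    exact Finset.sum_congr rfl hx
  · rw [map_sum]
    refine Finset.sum_congr rfl fun n _ => ?_
    rw [hF n ((hφ n).toLp _) _ ?_]
    · refine integral_congr_ae ?_
      filter_upwards [(hφ n).coeFn_toLp] with x hx
      rw [hx]
    · filter_upwards [(hφψ n).coeFn_toLp, (hφ n).coeFn_toLp] with x h1 h2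
      rw [h1, h2]

theorem integral_norm_select_mul_le {ι : Type*} {ψ : ι → E} {g : ι → X → ℂ}
    (hF : ∀ n, ActsByIntegration F (ψ n) (g n))
    (hψ : ∀ n, ‖ψ n‖ ≤ 1) (hg : ∀ n, Measurable (g n)) {q : ℝ} (hpq : p.HolderConjugate q)
    (hgq : ∀ n, MemLp (g n) (.ofReal q) μ) [MeasurableSpace ι] [MeasurableSingletonClass ι]
    (s : Finset ι) {k : X → ι} (hk : Measurable k) (hks : ∀ x, k x ∈ s)
    {φ : X → ℝ} (hφ : Measurable φ) (hφ0 : 0 ≤ φ) (hφp : MemLp φ (.ofReal p) μ) :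
    ∫ x, ‖g (k x) x‖ * φ x ∂μ ≤ ‖F‖ * (eLpNorm φ (.ofReal p) μ).toReal := by
  have := hpq.symm.ennrealOfReal
  -- on `k = n`, multiply `φ` by the phase `‖g n‖ / g n`, which is `0` where `g n = 0` (`x / 0 = 0`)
  set φ' : ι → X → ℂ := fun n => (k ⁻¹' {n}).indicator fun x => φ x * (‖g n x‖ / g n x)
  have hφ'_le : ∀ n x, ‖φ' n x‖ ≤ φ x := fun n x => by
    by_cases hx : x ∈ k ⁻¹' {n}
    · simp only [φ', Set.indicator_of_mem hx, norm_mul, norm_div, Complex.norm_real, norm_norm,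
        Real.norm_of_nonneg (hφ0 x)]
      exact mul_le_of_le_one_right (hφ0 x) (div_self_le_one _)
    · simp only [φ', Set.indicator_of_notMem hx, norm_zero]
      exact hφ0 x
  have hφ'p : ∀ n, MemLp (φ' n) (.ofReal p) μ := fun n =>
    hφp.of_le (((Complex.measurable_ofReal.comp hφ).mul
      ((Complex.measurable_ofReal.comp (hg n).norm).div (hg n))).indicator
        (hk (measurableSet_singleton n))).aestronglyMeasurable
      (.of_forall fun x => (hφ'_le n x).trans (le_abs_self _))
  have hφ'_off : ∀ n x, n ≠ k x → φ' n x = 0 := fun n x hn =>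
    Set.indicator_of_notMem (show x ∉ k ⁻¹' {n} from Ne.symm hn) _
  have hφ'_on : ∀ x, φ' (k x) x = φ x * (‖g (k x) x‖ / g (k x) x) := fun x =>
    Set.indicator_of_mem (show x ∈ k ⁻¹' {k x} from rfl) _
  obtain ⟨G, hG, hFG⟩ := exists_Lp_ae_eq_sum_smul_and_apply_eq hF s hφ'p
  have hG_le : ‖G‖ ≤ (eLpNorm φ (.ofReal p) μ).toReal := by
    rw [Lp.norm_def]
    refine ENNReal.toReal_mono hφp.eLpNorm_ne_top (eLpNorm_mono_ae_real ?_)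
    filter_upwards [hG] with x hx
    rw [hx, Finset.sum_eq_single_of_mem (k x) (hks x)
      fun n _ hn => by rw [hφ'_off n x hn, zero_smul], norm_smul]
    exact (mul_le_of_le_one_right (norm_nonneg _) (hψ _)).trans (hφ'_le _ x)
  have hFG' : F G = ((∫ x, ‖g (k x) x‖ * φ x ∂μ : ℝ) : ℂ) := by
    rw [hFG, ← integral_finsetSum (f := fun n x => g n x * φ' n x) s
      fun n _ => (hgq n).integrable_mul (hφ'p n), ← integral_complex_ofReal]
    congr 1 with x
    rw [Finset.sum_eq_single_of_mem (k x) (hks x) fun n _ hn => by rw [hφ'_off n x hn, mul_zero],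
      hφ'_on]
    by_cases hgx : g (k x) x = 0
    · simp [hgx]
    · field_simp
      push_cast
      ring
  calc ∫ x, ‖g (k x) x‖ * φ x ∂μ ≤ ‖F G‖ := by
        rw [hFG', Complex.norm_real, Real.norm_eq_abs]
        exact le_abs_self _
    _ ≤ ‖F‖ * ‖G‖ := F.le_opNorm G
    _ ≤ ‖F‖ * (eLpNorm φ (.ofReal p) μ).toReal := by gcongr

theorem eLpNorm_partialSups_norm_le {ψ : ℕ → E} {g : ℕ → X → ℂ}
    (hF : ∀ n, ActsByIntegration F (ψ n) (g n))
    (hψ : ∀ n, ‖ψ n‖ ≤ 1) (hg : ∀ n, Measurable (g n)) {q : ℝ} (hpq : p.HolderConjugate q)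
    (hgq : ∀ n, MemLp (g n) (.ofReal q) μ) (N : ℕ) :
    eLpNorm (partialSups (fun n x => ‖g n x‖) N) (.ofReal q) μ ≤ .ofReal ‖F‖ := by
  set M := partialSups (fun n x => ‖g n x‖) N
  obtain ⟨k, hk, hks⟩ :=
    exists_measurable_argmax (fun n => (hg n).norm) (Finset.Iic N) Finset.nonempty_Iic
  have hMk : ∀ x, M x = ‖g (k x) x‖ := fun x =>
    (Pi.partialSups_apply (fun n x => ‖g n x‖) N x).trans (hks x).2.symm
  have hMm : Measurable M := Finset.measurable_sup' Finset.nonempty_Iic fun n _ => (hg n).norm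
  have hMq : MemLp M (.ofReal q) μ := by
    refine (memLp_finsetSum' (Finset.Iic N) fun n _ => (hgq n).norm).of_le hMm.aestronglyMeasurable
      (.of_forall fun x => ?_)
    rw [hMk, norm_norm, Finset.sum_apply, Real.norm_of_nonneg (by positivity)]
    exact Finset.single_le_sum (f := fun n => ‖g n x‖) (fun _ _ => norm_nonneg _) (hks x).1
  refine eLpNorm_le_of_integral_mul_le hpq hMm (fun x => (hMk x).symm ▸ norm_nonneg _) hMq
    fun φ hφ hφ0 hφp => ?_
  simp_rw [hMk]
  exact integral_norm_select_mul_le hF hψ hg hpq hgq _ hk (fun x => (hks x).1) hφ hφ0 hφp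

end

theorem dominating_function_of_extension_general
    (d : ℕ) (p p' : ℝ) (hp : 1 < p) (hconj : 1 / p + 1 / p' = 1)
    (E : Type*) [NormedAddCommGroup E] [NormedSpace ℂ E]
    [TopologicalSpace.SeparableSpace E]
    [Fact (1 ≤ ENNReal.ofReal p)] [Fact (1 ≤ ENNReal.ofReal p')]
    (T : E →L[ℂ] Lp ℂ (ENNReal.ofReal p') (volume : Measure (Fin d → ℝ)))
    (F : Lp E (ENNReal.ofReal p) (volume : Measure (Fin d → ℝ)) →L[ℂ] ℂ)
    (hF : ∀ (φ : Lp ℂ (ENNReal.ofReal p) (volume : Measure (Fin d → ℝ))) (ψ : E)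
      (g : Lp E (ENNReal.ofReal p) (volume : Measure (Fin d → ℝ))),
      (g : (Fin d → ℝ) → E) =ᵐ[volume] (fun x => φ x • ψ) →
      F g = ∫ x : Fin d → ℝ, (T ψ : (Fin d → ℝ) → ℂ) x * (φ : (Fin d → ℝ) → ℂ) x) :
    ∃ b : (Fin d → ℝ) → ℝ, (∀ x, 0 ≤ b x) ∧
      MemLp b (ENNReal.ofReal p') (volume : Measure (Fin d → ℝ)) ∧
      ∀ ψ : E, ∀ᵐ x ∂(volume : Measure (Fin d → ℝ)),
        ‖(T ψ : (Fin d → ℝ) → ℂ) x‖ ≤ b x * ‖ψ‖ := by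
  have hpq : p.HolderConjugate p' :=
    Real.holderConjugate_iff.2 ⟨hp, by simpa only [one_div] using hconj⟩
  obtain ⟨v, hv⟩ := TopologicalSpace.exists_dense_seq E
  set w : ℕ → E := fun n => ((‖v n‖⁻¹ : ℝ) : ℂ) • v n
  have hw : ∀ n, ‖w n‖ ≤ 1 := fun n => by
    rw [norm_smul, Complex.norm_real, norm_inv, norm_norm]
    exact inv_mul_le_one
  set g : ℕ → (Fin d → ℝ) → ℂ := fun n => (Lp.aestronglyMeasurable (T (w n))).mk _
  have hTg : ∀ n, ⇑(T (w n)) =ᵐ[volume] g n := fun n => (Lp.aestronglyMeasurable _).ae_eq_mk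
  have hg : ∀ n, Measurable (g n) := fun n =>
    (Lp.aestronglyMeasurable _).stronglyMeasurable_mk.measurable
  have hFg : ∀ n, ActsByIntegration F (w n) (g n) := fun n =>
    ActsByIntegration.congr (fun φ G => hF φ (w n) G) (hTg n)
  obtain ⟨b, hb0, hbq, hgb⟩ := exists_memLp_ae_le_of_eLpNorm_partialSups_le
    (fun n => (hg n).norm) (fun n x => norm_nonneg _) (by simpa using hpq.symm.pos)
    ENNReal.ofReal_ne_top ENNReal.ofReal_ne_top
    (eLpNorm_partialSups_norm_le hFg hw hg hpq fun n => (Lp.memLp _).ae_eq (hTg n))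
  refine ⟨b, hb0, hbq, ae_norm_le_mul_norm_of_denseRange T.continuous hv fun n =>
    ae_norm_le_mul_norm_of_normalized T (v n) ?_⟩
  filter_upwards [hTg n, hgb n] with x hx hgbx
  exact (congrArg norm hx).trans_le hgbx

/-- If `T : E → L^{p'}(ℝ^d; ℂ)` is a bounded operator on a separable complex Banach space `E`
and there is a continuous linear functional `F` on the Bochner space `L^p(ℝ^d; E)` with
`F(φ·ψ) = ∫ (Tψ)(x) φ(x) dx` for all `φ ∈ L^p(ℝ^d; ℂ)`, `ψ ∈ E`, then there is a nonnegative
`b ∈ L^{p'}(ℝ^d)` such that for every `ψ ∈ E`, `|(Tψ)(x)| ≤ b(x)‖ψ‖` for a.e. `x`. -/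
theorem dominating_function_of_extension
    (d : ℕ) (p p' : ℝ) (hp : 1 < p) (hconj : 1 / p + 1 / p' = 1)
    (E : Type*) [NormedAddCommGroup E] [NormedSpace ℂ E] [CompleteSpace E]
    [TopologicalSpace.SeparableSpace E]
    [Fact (1 ≤ ENNReal.ofReal p)] [Fact (1 ≤ ENNReal.ofReal p')]
    (T : E →L[ℂ] Lp ℂ (ENNReal.ofReal p') (volume : Measure (Fin d → ℝ)))
    (F : Lp E (ENNReal.ofReal p) (volume : Measure (Fin d → ℝ)) →L[ℂ] ℂ)
    (hF : ∀ (φ : Lp ℂ (ENNReal.ofReal p) (volume : Measure (Fin d → ℝ))) (ψ : E)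
      (g : Lp E (ENNReal.ofReal p) (volume : Measure (Fin d → ℝ))),
      (g : (Fin d → ℝ) → E) =ᵐ[volume] (fun x => φ x • ψ) →
      F g = ∫ x : Fin d → ℝ, (T ψ : (Fin d → ℝ) → ℂ) x * (φ : (Fin d → ℝ) → ℂ) x) :
    ∃ b : (Fin d → ℝ) → ℝ, (∀ x, 0 ≤ b x) ∧
      MemLp b (ENNReal.ofReal p') (volume : Measure (Fin d → ℝ)) ∧
      ∀ ψ : E, ∀ᵐ x ∂(volume : Measure (Fin d → ℝ)),
        ‖(T ψ : (Fin d → ℝ) → ℂ) x‖ ≤ b x * ‖ψ‖ :=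
  dominating_function_of_extension_general d p p' hp hconj E T F hF
end

section
/- Let η be a Borel probability measure on ℝ and let g : ℝ → ℝ be a continuous nondecreasing function. Assume that the functions λ ↦ λ, λ ↦ g(λ) and λ ↦ λ·g(λ) are all η-integrable, and set u = ∫_ℝ λ dη(λ) and w = ∫_ℝ g(λ) dη(λ). If ∫_ℝ λ·g(λ) dη(λ) = u·w, then ∫_ℝ (λ − u)(g(λ) − g(u)) dη(λ) = 0, the equality g(λ) = g(u) holds for η-almost every λ, and consequently w = g(u). -/
/-!
Expanding the product, `∫ (λ - u) (g λ - g u) dη = ∫ λ g(λ) dη - u w`, which vanishes by the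
moment identity. Since `g` is monotone the integrand is nonnegative, so it vanishes `η`-a.e.;
where `λ ≠ u` this forces `g λ = g u`.
-/

open MeasureTheory

section Centered

variable {Ω : Type*} [MeasurableSpace Ω] {μ : Measure Ω} {X Y : Ω → ℝ}

lemma MeasureTheory.Integrable.sub_const_mul_sub_const [IsFiniteMeasure μ] (hX : Integrable X μ)
    (hY : Integrable Y μ) (hXY : Integrable (fun ω => X ω * Y ω) μ) (a b : ℝ) :
    Integrable (fun ω => (X ω - a) * (Y ω - b)) μ :=
  ((hXY.sub (hX.const_mul b)).sub ((hY.const_mul a).sub (integrable_const (a * b)))).congr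
    (ae_of_all _ fun ω => by simp only [Pi.sub_apply]; ring)

lemma integral_sub_integral_mul_sub_const [IsProbabilityMeasure μ] (hX : Integrable X μ)
    (hY : Integrable Y μ) (hXY : Integrable (fun ω => X ω * Y ω) μ) (c : ℝ) :
    ∫ ω, (X ω - ∫ x, X x ∂μ) * (Y ω - c) ∂μ =
      ∫ ω, X ω * Y ω ∂μ - (∫ x, X x ∂μ) * ∫ y, Y y ∂μ := by
  set m := ∫ x, X x ∂μ
  have h_expand : (fun ω => (X ω - m) * (Y ω - c)) =
      fun ω => (X ω * Y ω - c * X ω) - (m * Y ω - m * c) := by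
    funext ω; ring
  have hXY_c : Integrable (fun ω => X ω * Y ω - c * X ω) μ := hXY.sub (hX.const_mul c)
  have hY_m : Integrable (fun ω => m * Y ω - m * c) μ := (hY.const_mul m).sub (integrable_const _)
  rw [h_expand, integral_sub hXY_c hY_m, integral_sub hXY (hX.const_mul c),
    integral_sub (hY.const_mul m) (integrable_const _),
    integral_const_mul, integral_const_mul, integral_const, probReal_univ, one_smul]
  ring

end Centered

lemma Monotone.ae_eq_of_integral_sub_mul_sub_eq_zero {μ : Measure ℝ} {g : ℝ → ℝ}
    (hg : Monotone g) {a : ℝ} (hint : Integrable (fun x => (x - a) * (g x - g a)) μ)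
    (h_zero : ∫ x, (x - a) * (g x - g a) ∂μ = 0) : ∀ᵐ x ∂μ, g x = g a := by
  have h_nonneg : 0 ≤ᵐ[μ] fun x => (x - a) * (g x - g a) :=
    ae_of_all _ fun x => (monotone_id.monovary hg).sub_mul_sub_nonneg a x
  filter_upwards [(integral_eq_zero_iff_of_nonneg_ae h_nonneg hint).mp h_zero] with x hx
  rcases mul_eq_zero.mp hx with hxa | hgx
  · rw [sub_eq_zero.mp hxa]
  · exact sub_eq_zero.mp hgx

theorem young_measure_identification_general
    (η : Measure ℝ) [IsProbabilityMeasure η]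
    (g : ℝ → ℝ) (hg_mono : Monotone g)
    (h_int_id : Integrable (fun lam : ℝ => lam) η)
    (h_int_g : Integrable g η)
    (h_int_mul : Integrable (fun lam : ℝ => lam * g lam) η)
    (u w : ℝ)
    (hu : u = ∫ lam : ℝ, lam ∂η)
    (hw : w = ∫ lam : ℝ, g lam ∂η)
    (h_moment : ∫ lam : ℝ, lam * g lam ∂η = u * w) :
    (∫ lam : ℝ, (lam - u) * (g lam - g u) ∂η = 0) ∧
    (∀ᵐ lam ∂η, g lam = g u) ∧
    w = g u := by
  have h_zero : ∫ lam : ℝ, (lam - u) * (g lam - g u) ∂η = 0 := by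
    rw [hu, integral_sub_integral_mul_sub_const h_int_id h_int_g h_int_mul, ← hu, ← hw,
      h_moment, sub_self]
  have h_ae : ∀ᵐ lam ∂η, g lam = g u :=
    hg_mono.ae_eq_of_integral_sub_mul_sub_eq_zero
      (h_int_id.sub_const_mul_sub_const h_int_g h_int_mul u (g u)) h_zero
  refine ⟨h_zero, h_ae, ?_⟩
  rw [hw, integral_congr_ae h_ae, integral_const, probReal_univ, one_smul]

/-- The Young-measure identification step: if `η` is a probability measure on `ℝ` with
barycenter `u`, `g` is continuous and nondecreasing, and `∫ λ g(λ) dη = u·w` where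
`w = ∫ g dη`, then `∫ (λ − u)(g(λ) − g(u)) dη = 0`, `g(λ) = g(u)` for `η`-a.e. `λ`,
and `w = g(u)`. -/
theorem young_measure_identification
    (η : Measure ℝ) [IsProbabilityMeasure η]
    (g : ℝ → ℝ) (hg_cont : Continuous g) (hg_mono : Monotone g)
    (h_int_id : Integrable (fun lam : ℝ => lam) η)
    (h_int_g : Integrable g η)
    (h_int_mul : Integrable (fun lam : ℝ => lam * g lam) η)
    (u w : ℝ)
    (hu : u = ∫ lam : ℝ, lam ∂η)
    (hw : w = ∫ lam : ℝ, g lam ∂η)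
    (h_moment : ∫ lam : ℝ, lam * g lam ∂η = u * w) :
    (∫ lam : ℝ, (lam - u) * (g lam - g u) ∂η = 0) ∧
    (∀ᵐ lam ∂η, g lam = g u) ∧
    w = g u :=
  young_measure_identification_general η g hg_mono h_int_id h_int_g h_int_mul u w hu hw h_moment
end
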